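/- arXiv:2105.03284 — 2 statements merged into one kernel-verified Lean document; each statement's English description precedes it below -/
import Mathlib

section
/- For every η > 0 there exist ε > 0 and a constant s_η > 0 with the following property. Let P, Q, P′, Q′ be points of the unit circle of the Euclidean plane with ‖P − Q‖ > η, and suppose that the Hausdorff distance d_H between the chords c = [P, Q] and c′ = [P′, Q′] satisfies d_H(c, c′) < ε. Then the endpoints of c′ can be labelled in a unique way as P′ and Q′ so that ‖P − P′‖ < ‖Q − P′‖ and ‖Q − Q′‖ < ‖Q − P′‖, and for this labelling one has d_H(c, c′) ≤ max(‖P − P′‖, ‖Q − Q′‖) ≤ s_η · d_H(c, c′). -/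
/-- The Euclidean plane. -/
abbrev Plane := EuclideanSpace ℝ (Fin 2)

/-!
For unit vectors `P`, `Q` the point `Z = lineMap P Q t` of the chord satisfies
`‖Z‖² = 1 - t (1 - t) ‖P - Q‖²`. A point of the chord within `h` of the unit circle therefore
has `t (1 - t) ‖P - Q‖² ≤ 2 h`, so it lies within `(1 + 8 / η²) h` of `P` or of `Q`.
Each endpoint of `c'` is within `d_H(c, c')` of `c`, hence close to `P` or to `Q`; they cannot
both be close to the same endpoint of `c`, for then the other endpoint of `c` would be far from
`c'`. This matching determines the labelling by the triangle inequality, and `d_H` is at most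
`max ‖P - P'‖ ‖Q - Q'‖` because `lineMap P Q t` and `lineMap P' Q' t` are that close.
-/

open Metric AffineMap Set

section Segment

variable {E : Type*} [NormedAddCommGroup E] [NormedSpace ℝ E]

theorem isCompact_segment (x y : E) : IsCompact (segment ℝ x y) := by
  rw [segment_eq_image_lineMap]
  exact isCompact_Icc.image lineMap_continuous

theorem dist_lineMap_lineMap_le_max (P Q X Y : E) {t : ℝ} (ht : t ∈ Icc (0 : ℝ) 1) :
    dist (lineMap P Q t) (lineMap X Y t) ≤ max (dist P X) (dist Q Y) := by
  have hball := (convex_closedBall (0 : E) (max (dist P X) (dist Q Y))).lineMap_mem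
    (x := P - X) (y := Q - Y) (by simp [← dist_eq_norm]) (by simp [← dist_eq_norm]) ht
  rwa [mem_closedBall_zero_iff, ← vsub_eq_sub, ← vsub_eq_sub, ← lineMap_vsub_lineMap,
    vsub_eq_sub, ← dist_eq_norm] at hball

theorem hausdorffDist_segment_le_max (P Q X Y : E) :
    hausdorffDist (segment ℝ P Q) (segment ℝ X Y) ≤ max (dist P X) (dist Q Y) := by
  refine hausdorffDist_le_of_mem_dist (le_max_of_le_left dist_nonneg) ?_ ?_ <;>
    simp only [segment_eq_image_lineMap, forall_mem_image, exists_mem_image]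
  · exact fun t ht ↦ ⟨t, ht, dist_lineMap_lineMap_le_max P Q X Y ht⟩
  · refine fun t ht ↦ ⟨t, ht, ?_⟩
    rw [dist_comm P, dist_comm Q]
    exact dist_lineMap_lineMap_le_max X Y P Q ht

theorem exists_mem_segment_dist_le_hausdorffDist {P Q X Y A : E} (hA : A ∈ segment ℝ P Q) :
    ∃ W ∈ segment ℝ X Y, dist A W ≤ hausdorffDist (segment ℝ P Q) (segment ℝ X Y) := by
  have hne : (segment ℝ X Y).Nonempty := ⟨X, left_mem_segment ℝ X Y⟩
  obtain ⟨W, hW, hAW⟩ := (isCompact_segment X Y).exists_infDist_eq_dist hne A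
  refine ⟨W, hW, hAW ▸ infDist_le_hausdorffDist_of_mem hA ?_⟩
  exact hausdorffEDist_ne_top_of_nonempty_of_bounded ⟨A, hA⟩ hne
    (isCompact_segment P Q).isBounded (isCompact_segment X Y).isBounded

theorem dist_le_add_hausdorffDist_segment {P Q X Y A c : E} {r : ℝ} (hA : A ∈ segment ℝ P Q)
    (hX : dist X c ≤ r) (hY : dist Y c ≤ r) :
    dist A c ≤ r + hausdorffDist (segment ℝ P Q) (segment ℝ X Y) := by
  obtain ⟨W, hW, hAW⟩ := exists_mem_segment_dist_le_hausdorffDist (X := X) (Y := Y) hA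
  have hWc : dist W c ≤ r := (convex_closedBall c r).segment_subset hX hY hW
  linarith [dist_triangle A W c]

end Segment

open RealInnerProductSpace

section UnitCircle

variable {E : Type*} [NormedAddCommGroup E] [InnerProductSpace ℝ E]

theorem norm_lineMap_sq_of_norm_eq_one {P Q : E} (hP : ‖P‖ = 1) (hQ : ‖Q‖ = 1) (t : ℝ) :
    ‖lineMap P Q t‖ ^ 2 = 1 - t * (1 - t) * ‖P - Q‖ ^ 2 := by
  rw [lineMap_apply_module, norm_add_sq_real, norm_sub_sq_real, norm_smul, norm_smul,
    real_inner_smul_left, real_inner_smul_right, hP, hQ, Real.norm_eq_abs, Real.norm_eq_abs,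
    mul_pow, mul_pow, sq_abs, sq_abs]
  ring

/-- The constant `s_η` of the statement. -/
noncomputable def chordConst (η : ℝ) : ℝ := 1 + 8 / η ^ 2

theorem one_le_chordConst (η : ℝ) : 1 ≤ chordConst η :=
  le_add_of_nonneg_right (by positivity)

theorem dist_left_le_of_dist_lineMap_le {P Q X : E} {η h t : ℝ} (hP : ‖P‖ = 1) (hQ : ‖Q‖ = 1)
    (hX : ‖X‖ = 1) (hη : 0 < η) (hPQ : η ≤ ‖P - Q‖) (ht₀ : 0 ≤ t) (ht : t ≤ 1 / 2)
    (hXZ : dist X (lineMap P Q t) ≤ h) : dist X P ≤ chordConst η * h := by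
  set Z : E := lineMap P Q t
  have hZsq := norm_lineMap_sq_of_norm_eq_one hP hQ t
  have hZ_le : ‖Z‖ ≤ 1 := by
    have : 0 ≤ 1 - t := by linarith
    have : 0 ≤ t * (1 - t) * ‖P - Q‖ ^ 2 := by positivity
    nlinarith [norm_nonneg Z]
  have hZ_ge : 1 - h ≤ ‖Z‖ := by
    linarith [hX ▸ dist_eq_norm X Z ▸ norm_sub_norm_le X Z]
  -- `1 - ‖Z‖²` is at most `2 (1 - ‖Z‖) ≤ 2 h`, while `1 - t ≥ 1/2`.
  have ht_small : t * η ^ 2 ≤ 4 * h := by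
    have : η ^ 2 ≤ ‖P - Q‖ ^ 2 := pow_le_pow_left₀ hη.le hPQ 2
    nlinarith [mul_le_mul_of_nonneg_left this (by nlinarith : 0 ≤ t * (1 - t))]
  have hZP : dist Z P ≤ 8 / η ^ 2 * h := by
    have hPQ2 : dist P Q ≤ 2 := by
      rw [dist_eq_norm]; linarith [norm_sub_le P Q]
    rw [dist_lineMap_left, Real.norm_of_nonneg ht₀, div_mul_eq_mul_div, le_div_iff₀ (by positivity)]
    nlinarith [mul_le_mul_of_nonneg_left hPQ2 (by positivity : 0 ≤ t * η ^ 2)]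
  unfold chordConst
  linarith [dist_triangle X Z P]

theorem dist_left_le_or_dist_right_le {P Q X Z : E} {η h : ℝ} (hP : ‖P‖ = 1) (hQ : ‖Q‖ = 1)
    (hX : ‖X‖ = 1) (hη : 0 < η) (hPQ : η ≤ ‖P - Q‖) (hZ : Z ∈ segment ℝ P Q)
    (hXZ : dist X Z ≤ h) : dist X P ≤ chordConst η * h ∨ dist X Q ≤ chordConst η * h := by
  rw [segment_eq_image_lineMap] at hZ
  obtain ⟨t, ⟨ht₀, ht₁⟩, rfl⟩ := hZ
  rcases le_total t (1 / 2) with ht | ht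
  · exact .inl (dist_left_le_of_dist_lineMap_le hP hQ hX hη hPQ ht₀ ht hXZ)
  · rw [← lineMap_apply_one_sub] at hXZ
    exact .inr (dist_left_le_of_dist_lineMap_le hQ hP hX hη (norm_sub_rev P Q ▸ hPQ)
      (by linarith) (by linarith) hXZ)

theorem endpoints_close_of_hausdorffDist_le {P Q X Y : E} {η r : ℝ} (hP : ‖P‖ = 1)
    (hQ : ‖Q‖ = 1) (hX : ‖X‖ = 1) (hY : ‖Y‖ = 1) (hη : 0 < η) (hPQ : η ≤ ‖P - Q‖)
    (hr : chordConst η * hausdorffDist (segment ℝ P Q) (segment ℝ X Y) ≤ r) (hrη : 2 * r < η) :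
    dist X P ≤ r ∧ dist Y Q ≤ r ∨ dist Y P ≤ r ∧ dist X Q ≤ r := by
  have hdH : hausdorffDist (segment ℝ P Q) (segment ℝ X Y) ≤ r :=
    (le_mul_of_one_le_left hausdorffDist_nonneg (one_le_chordConst η)).trans hr
  have hnear {W : E} (hW : ‖W‖ = 1) (hWXY : W ∈ segment ℝ X Y) : dist W P ≤ r ∨ dist W Q ≤ r := by
    obtain ⟨Z, hZ, hWZ⟩ := exists_mem_segment_dist_le_hausdorffDist (X := P) (Y := Q) hWXY
    rw [hausdorffDist_comm] at hWZ
    exact (dist_left_le_or_dist_right_le hP hQ hW hη hPQ hZ hWZ).imp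
      (·.trans hr) (·.trans hr)
  -- both ends of `[X, Y]` near one end of `[P, Q]` would leave the other end of `[P, Q]` far away
  have hfar {A B : E} (hA : A ∈ segment ℝ P Q) (hAB : η ≤ dist A B) :
      ¬ (dist X B ≤ r ∧ dist Y B ≤ r) := by
    rintro ⟨hXB, hYB⟩
    linarith [dist_le_add_hausdorffDist_segment hA hXB hYB]
  have hP' := left_mem_segment ℝ P Q
  have hQ' := right_mem_segment ℝ P Q
  have hPQ' : η ≤ dist P Q := dist_eq_norm P Q ▸ hPQ
  rcases hnear hX (left_mem_segment ℝ X Y) with hXP | hXQ <;>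
    rcases hnear hY (right_mem_segment ℝ X Y) with hYP | hYQ
  exacts [(hfar hQ' (dist_comm P Q ▸ hPQ') ⟨hXP, hYP⟩).elim, .inl ⟨hXP, hYQ⟩, .inr ⟨hYP, hXQ⟩,
    (hfar hP' hPQ' ⟨hXQ, hYQ⟩).elim]

end UnitCircle

theorem endpoint_labelling_iff {E : Type*} [NormedAddCommGroup E] {P Q X Y : E} {r : ℝ}
    (hX : ‖P - X‖ ≤ r) (hY : ‖Q - Y‖ ≤ r) (hPQ : 2 * r < ‖P - Q‖) {pq : E × E}
    (hpq : ({pq.1, pq.2} : Set E) = {X, Y}) :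
    ‖P - pq.1‖ < ‖Q - pq.1‖ ∧ ‖Q - pq.2‖ < ‖Q - pq.1‖ ↔ pq = (X, Y) := by
  have hQX := norm_sub_le_norm_sub_add_norm_sub P X Q
  have hPY := norm_sub_le_norm_sub_add_norm_sub P Y Q
  rw [norm_sub_rev X Q] at hQX
  rw [norm_sub_rev Y Q] at hPY
  obtain ⟨p, q⟩ := pq
  dsimp only at hpq ⊢
  rcases Set.pair_eq_pair_iff.1 hpq with ⟨rfl, rfl⟩ | ⟨rfl, rfl⟩
  · simp only [iff_true]
    constructor <;> linarith
  · simp only [Prod.mk.injEq]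
    constructor
    · rintro ⟨h, -⟩
      linarith
    · rintro ⟨rfl, -⟩
      linarith

theorem stmt7 :
    ∀ η > (0 : ℝ), ∃ ε > (0 : ℝ), ∃ s > (0 : ℝ),
      ∀ P Q X Y : Plane, ‖P‖ = 1 → ‖Q‖ = 1 → ‖X‖ = 1 → ‖Y‖ = 1 →
        η < ‖P - Q‖ →
        Metric.hausdorffDist (segment ℝ P Q) (segment ℝ X Y) < ε →
        (∃! pq : Plane × Plane, ({pq.1, pq.2} : Set Plane) = {X, Y} ∧
            ‖P - pq.1‖ < ‖Q - pq.1‖ ∧ ‖Q - pq.2‖ < ‖Q - pq.1‖) ∧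
        ∀ pq : Plane × Plane, ({pq.1, pq.2} : Set Plane) = {X, Y} →
          ‖P - pq.1‖ < ‖Q - pq.1‖ → ‖Q - pq.2‖ < ‖Q - pq.1‖ →
          Metric.hausdorffDist (segment ℝ P Q) (segment ℝ X Y) ≤
              max ‖P - pq.1‖ ‖Q - pq.2‖ ∧
            max ‖P - pq.1‖ ‖Q - pq.2‖ ≤
              s * Metric.hausdorffDist (segment ℝ P Q) (segment ℝ X Y) := by
  intro η hη
  have hs : 0 < chordConst η := zero_lt_one.trans_le (one_le_chordConst η)
  refine ⟨η / (2 * chordConst η), by positivity, chordConst η, hs, ?_⟩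
  intro P Q X Y hP hQ hX hY hPQ hε
  have hrη : 2 * (chordConst η * hausdorffDist (segment ℝ P Q) (segment ℝ X Y)) < η := by
    rwa [lt_div_iff₀ (by positivity), mul_comm, mul_assoc] at hε
  wlog hXY : dist X P ≤ chordConst η * hausdorffDist (segment ℝ P Q) (segment ℝ X Y) ∧
      dist Y Q ≤ chordConst η * hausdorffDist (segment ℝ P Q) (segment ℝ X Y) generalizing X Y
  · have hYX :=
      (endpoints_close_of_hausdorffDist_le hP hQ hX hY hη hPQ.le le_rfl hrη).resolve_left hXY
    rw [segment_symm ℝ X Y] at hε hrη hYX ⊢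
    rw [Set.pair_comm X Y]
    exact this Y X hY hX hε hrη hYX
  rw [dist_comm, dist_eq_norm, dist_comm, dist_eq_norm] at hXY
  obtain ⟨hPX, hQY⟩ := hXY
  have hlabel {pq : Plane × Plane} := endpoint_labelling_iff hPX hQY (hrη.trans hPQ) (pq := pq)
  refine ⟨⟨(X, Y), ⟨rfl, (hlabel rfl).2 rfl⟩, fun pq hpq ↦ (hlabel hpq.1).1 hpq.2⟩, ?_⟩
  rintro pq hpq h₁ h₂
  obtain rfl := (hlabel hpq).1 ⟨h₁, h₂⟩
  refine ⟨?_, max_le hPX hQY⟩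
  simpa only [dist_eq_norm] using hausdorffDist_segment_le_max P Q X Y
end

section
/- Let n ≥ 2 and let (t₁, …, t_{n−1}) ∈ 𝔽ₙ⁰ be a minimal factorization of the n-cycle. Write each transposition tᵢ = (aᵢ bᵢ) with aᵢ < bᵢ. Then no two of these transpositions cross: there exist no indices i ≠ j with aᵢ < a_j < bᵢ < b_j. Equivalently, the chords joining e^{−2πi aᵢ/n} to e^{−2πi bᵢ/n} in the unit disk are pairwise noncrossing (they may share endpoints). -/
/-- Left-to-right product of a list of permutations: the leftmost entry is applied first. -/
def prodLR {n : ℕ} (l : List (Equiv.Perm (Fin n))) : Equiv.Perm (Fin n) :=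
  l.reverse.prod

/-- The set `𝔽ₙᵍ` of genus-`g` factorizations of the `n`-cycle `(1 2 ⋯ n)`
into transpositions; `𝔽ₙ⁰` is the set of minimal factorizations. -/
def Fcal (n g : ℕ) : Set (List (Equiv.Perm (Fin n))) :=
  {l | l.length = n - 1 + 2 * g ∧ (∀ t ∈ l, t.IsSwap) ∧ prodLR l = finRotate n}

/-!
Write the cycle as `L.formPerm` for a strictly increasing list `L` and remove the transposition
`(x y)`, `x < y`, applied last in a minimal factorization. What remains is a factorization, with
one factor fewer, of the product of the two cycles on the arc `x ≤ z < y` of `L` and on its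
complement.
Since `k` transpositions leave at least `#L - k` classes of the relation they generate, no remaining
transposition can join the two arcs, and each arc receives a minimal factorization of its own
cycle. By induction the chords inside each arc do not cross, and a chord inside the arc cannot
cross one outside it, nor the chord `(x y)`.
-/

open Equiv List
open scoped Finset

lemma List.prod_filter_mul_prod_filter_not_of_commute {M : Type*} [Monoid M] (p : M → Bool)
    {l : List M} (h : ∀ a ∈ l, ∀ b ∈ l, p a → p b = false → Commute a b) :
    (l.filter p).prod * (l.filter (fun a => !p a)).prod = l.prod := by
  induction l with
  | nil => simp
  | cons a l ih =>
    have ih := ih fun b hb c hc => h b (mem_cons_of_mem _ hb) c (mem_cons_of_mem _ hc)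
    by_cases ha : p a
    · simp [ha, mul_assoc, ih]
    · have hcomm : Commute (l.filter p).prod a := Commute.list_prod_left _ _ fun b hb =>
        h b (mem_cons_of_mem _ (mem_of_mem_filter hb)) a mem_cons_self (mem_filter.1 hb).2
          (by simpa using ha)
      simp [ha, ← ih, ← mul_assoc, hcomm.eq]

section Perm

variable {α : Type*}

lemma List.prod_apply_eq_self {l : List (Equiv.Perm α)} {a : α} (h : ∀ t ∈ l, t a = a) :
    l.prod a = a := by
  induction l with
  | nil => rfl
  | cons t l ih =>
    rw [prod_cons, Perm.mul_apply, ih fun s hs => h s (mem_cons_of_mem _ hs), h t mem_cons_self]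

lemma Equiv.Perm.eq_left_of_mul_eq_mul {σ₁ σ₂ τ₁ τ₂ : Perm α} {S : Set α}
    (hσ₁ : ∀ z ∉ S, σ₁ z = z) (hτ₁ : ∀ z ∉ S, τ₁ z = z)
    (hσ₂ : ∀ z ∈ S, σ₂ z = z) (hτ₂ : ∀ z ∈ S, τ₂ z = z) (h : σ₁ * σ₂ = τ₁ * τ₂) : σ₁ = τ₁ := by
  ext z
  by_cases hz : z ∈ S
  · simpa [hσ₂ z hz, hτ₂ z hz] using congr($h z)
  · rw [hσ₁ z hz, hτ₁ z hz]

variable [DecidableEq α]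

lemma List.formPerm_cons_append_cons {x y : α} {B D : List α} (h : (x :: B ++ y :: D).Nodup) :
    formPerm (x :: B ++ y :: D) = Equiv.swap x y * (formPerm (x :: B) * formPerm (y :: D)) := by
  induction B generalizing x with
  | nil => simp
  | cons b B ih =>
    have hxb : x ≠ b := by simp_all
    have hxy : x ≠ y := by simp_all
    have hby : b ≠ y := by simp_all
    have hswap : Equiv.swap x b * Equiv.swap b y = Equiv.swap x y * Equiv.swap x b := by
      ext z; simp only [Perm.mul_apply, swap_apply_def]; split_ifs <;> simp_all
    rw [show formPerm (x :: b :: B ++ y :: D) = Equiv.swap x b * formPerm (b :: B ++ y :: D) from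
      formPerm_cons_cons _ _ _, ih (nodup_cons.1 h).2, formPerm_cons_cons, ← mul_assoc, hswap]
    group

lemma List.swap_mul_formPerm {A B C : List α} {x y : α} (h : (A ++ x :: B ++ y :: C).Nodup) :
    Equiv.swap x y * formPerm (A ++ x :: B ++ y :: C) =
      formPerm (x :: B) * formPerm (A ++ y :: C) := by
  have hrot : A ++ x :: B ++ y :: C ~r x :: B ++ y :: (C ++ A) := by
    simpa using isRotated_append (l := A) (l' := x :: B ++ y :: C)
  have hrot₂ : A ++ y :: C ~r y :: (C ++ A) := by
    simpa using isRotated_append (l := A) (l' := y :: C)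
  rw [formPerm_eq_of_isRotated h hrot, formPerm_cons_append_cons (hrot.nodup_iff.1 h),
    formPerm_eq_of_isRotated (h.sublist (by simp)) hrot₂, ← mul_assoc, swap_mul_self, one_mul]

end Perm

section Linked

variable {α : Type*}

def Linked (l : List (Perm α)) : α → α → Prop :=
  Relation.EqvGen fun a b => ∃ t ∈ l, t a = b

variable {l : List (Perm α)} {a b c : α}

lemma Linked.refl (l : List (Perm α)) (a : α) : Linked l a a := Relation.EqvGen.refl a

lemma Linked.symm (h : Linked l a b) : Linked l b a := Relation.EqvGen.symm _ _ h

lemma Linked.trans (h₁ : Linked l a b) (h₂ : Linked l b c) : Linked l a c :=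
  Relation.EqvGen.trans _ _ _ h₁ h₂

lemma Linked.of_mem {t : Perm α} (ht : t ∈ l) (a : α) : Linked l a (t a) := .rel _ _ ⟨t, ht, rfl⟩

lemma Linked.mono {l' : List (Perm α)} (h : l ⊆ l') (hab : Linked l a b) : Linked l' a b :=
  Relation.EqvGen.mono (fun _ _ ⟨t, ht, e⟩ => ⟨t, h ht, e⟩) _ _ hab

lemma Linked.eq_of_nil (h : Linked [] a b) : a = b := by
  induction h with
  | rel _ _ h => simp at h
  | refl => rfl
  | symm _ _ _ ih => exact ih.symm
  | trans _ _ _ _ _ ih₁ ih₂ => exact ih₁.trans ih₂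

lemma linked_prod_apply (l : List (Perm α)) (a : α) : Linked l a (l.prod a) := by
  induction l generalizing a with
  | nil => exact .refl _ a
  | cons t l ih => exact ((ih a).mono (subset_cons_self t l)).trans (.of_mem mem_cons_self _)

lemma Linked.of_swap_cons [DecidableEq α] {u v : α} (h : Linked (swap u v :: l) a b) :
    Linked l a b ∨ ((Linked l a u ∨ Linked l a v) ∧ (Linked l b u ∨ Linked l b v)) := by
  induction h with
  | rel a _ h =>
    obtain ⟨t, ht, rfl⟩ := h
    rcases mem_cons.1 ht with rfl | ht
    · rw [swap_apply_def]
      split_ifs with hu hv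
      · subst hu; exact .inr ⟨.inl (.refl _ _), .inr (.refl _ _)⟩
      · subst hv; exact .inr ⟨.inr (.refl _ _), .inl (.refl _ _)⟩
      · exact .inl (.refl _ _)
    · exact .inl (.of_mem ht a)
  | refl a => exact .inl (.refl _ a)
  | symm _ _ _ ih => exact ih.imp Linked.symm And.symm
  | trans _ _ _ _ _ ih₁ ih₂ =>
    rcases ih₁ with h₁ | ⟨ha, hb⟩ <;> rcases ih₂ with h₂ | ⟨hb', hc⟩
    · exact .inl (h₁.trans h₂)
    · exact .inr ⟨hb'.imp h₁.trans h₁.trans, hc⟩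
    · exact .inr ⟨ha, hb.imp h₂.symm.trans h₂.symm.trans⟩
    · exact .inr ⟨ha, hc⟩

/-- Each transposition merges at most two classes of `Linked`. -/
lemma card_le_length_add_card [DecidableEq α] (hl : ∀ t ∈ l, t.IsSwap) {T R : Finset α}
    (hT : ∀ z ∈ T, ∃ r ∈ R, Linked l z r) : #T ≤ l.length + #R := by
  induction l generalizing R with
  | nil =>
    have hTR : T ⊆ R := fun z hz => by
      obtain ⟨r, hr, h⟩ := hT z hz
      rwa [h.eq_of_nil]
    simpa using Finset.card_le_card hTR
  | cons t l ih =>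
    obtain ⟨u, v, -, rfl⟩ := hl t mem_cons_self
    replace ih := fun {R : Finset α} => ih (fun s hs => hl s (mem_cons_of_mem _ hs)) (R := R)
    replace hT : ∀ z ∈ T, ∃ r ∈ R, Linked l z r ∨
        ((Linked l z u ∨ Linked l z v) ∧ (Linked l r u ∨ Linked l r v)) :=
      fun z hz => (hT z hz).imp fun r => And.imp_right Linked.of_swap_cons
    have hins : ∀ w, l.length + #(insert w R) ≤ (swap u v :: l).length + #R := fun w => by
      grw [Finset.card_insert_le, length_cons]; omega
    by_cases hu : ∃ r₀ ∈ R, Linked l u r₀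
    · obtain ⟨r₀, hr₀, hur₀⟩ := hu
      refine (ih fun z hz => ?_).trans (hins v)
      obtain ⟨r, hr, h | ⟨hzu | hzv, -⟩⟩ := hT z hz
      · exact ⟨r, Finset.mem_insert_of_mem hr, h⟩
      · exact ⟨r₀, Finset.mem_insert_of_mem hr₀, hzu.trans hur₀⟩
      · exact ⟨v, Finset.mem_insert_self v R, hzv⟩
    by_cases hv : ∃ r₀ ∈ R, Linked l v r₀
    · obtain ⟨r₀, hr₀, hvr₀⟩ := hv
      refine (ih fun z hz => ?_).trans (hins u)
      obtain ⟨r, hr, h | ⟨hzu | hzv, -⟩⟩ := hT z hz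
      · exact ⟨r, Finset.mem_insert_of_mem hr, h⟩
      · exact ⟨u, Finset.mem_insert_self u R, hzu⟩
      · exact ⟨r₀, Finset.mem_insert_of_mem hr₀, hzv.trans hvr₀⟩
    simp only [not_exists, not_and] at hu hv
    refine (ih (R := R) fun z hz => ?_).trans (by simp)
    obtain ⟨r, hr, h | ⟨-, hru | hrv⟩⟩ := hT z hz
    · exact ⟨r, hr, h⟩
    · exact absurd hru.symm (hu r hr)
    · exact absurd hrv.symm (hv r hr)

lemma length_le_length_add_one_of_linked [DecidableEq α] (hl : ∀ t ∈ l, t.IsSwap)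
    {L : List α} (hL : L.Nodup) (h : ∀ z ∈ L, Linked l z a) : L.length ≤ l.length + 1 := by
  simpa [toFinset_card_of_nodup hL] using
    card_le_length_add_card hl (T := L.toFinset) (R := {a}) (by simpa using h)

lemma linked_of_prod_apply_eq_formPerm [DecidableEq α] {L : List α} (hL : L.Nodup)
    (h : ∀ z ∈ L, l.prod z = L.formPerm z) (ha : a ∈ L) : ∀ z ∈ L, Linked l z a := by
  have hL0 : 0 < L.length := length_pos_of_mem ha
  have key : ∀ i (hi : i < L.length), Linked l L[0] L[i] := by
    intro i hi
    induction i with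
    | zero => exact .refl _ _
    | succ i ih =>
      rw [← formPerm_apply_lt_getElem L hL i hi, ← h _ (getElem_mem _)]
      exact (ih (by omega)).trans (linked_prod_apply l _)
  intro z hz
  obtain ⟨i, hi, rfl⟩ := getElem_of_mem hz
  obtain ⟨j, hj, rfl⟩ := getElem_of_mem ha
  exact (key i hi).symm.trans (key j hj)

lemma length_le_length_add_one_of_prod_eq_formPerm [DecidableEq α] (hl : ∀ t ∈ l, t.IsSwap)
    {L : List α} (hL : L.Nodup) (h : l.prod = L.formPerm) : L.length ≤ l.length + 1 := by
  rcases L with _ | ⟨x, L⟩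
  · simp
  · exact length_le_length_add_one_of_linked hl hL <|
      linked_of_prod_apply_eq_formPerm hL (fun z _ => by rw [h]) mem_cons_self

end Linked

section Factorization

variable {α : Type*} [DecidableEq α]

def IsMinimalFactorization (L : List α) (l : List (Perm α)) : Prop :=
  (∀ t ∈ l, t.IsSwap ∧ ∀ z ∉ L, t z = z) ∧ l.length + 1 = L.length ∧ l.prod = L.formPerm

variable {L₁ L₂ : List α} {l : List (Perm α)}

lemma forall_apply_eq_or_of_prod_eq_formPerm_mul_formPerm (hL : (L₁ ++ L₂).Nodup)
    (hl : ∀ t ∈ l, t.IsSwap ∧ ∀ z ∉ L₁ ++ L₂, t z = z)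
    (hlen : l.length + 2 = L₁.length + L₂.length) (hprod : l.prod = L₁.formPerm * L₂.formPerm) :
    ∀ t ∈ l, (∀ z ∉ L₁, t z = z) ∨ (∀ z ∉ L₂, t z = z) := by
  obtain ⟨hnd₁, hnd₂, hdisj⟩ := nodup_append.1 hL
  have hagree₁ : ∀ z ∈ L₁, l.prod z = L₁.formPerm z := fun z hz => by
    rw [hprod, Perm.mul_apply, formPerm_apply_of_notMem fun h => hdisj z hz z h rfl]
  have hagree₂ : ∀ z ∈ L₂, l.prod z = L₂.formPerm z := fun z hz => by
    have : L₂.formPerm z ∈ L₂ := formPerm_apply_mem_of_mem hz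
    rw [hprod, Perm.mul_apply, formPerm_apply_of_notMem fun h => hdisj _ h _ this rfl]
  have hsep : ∀ p ∈ L₁, ∀ q ∈ L₂, ¬ Linked l p q := fun p hp q hq hpq => by
    have hall : ∀ z ∈ L₁ ++ L₂, Linked l z p := fun z hz => by
      rcases mem_append.1 hz with hz | hz
      · exact linked_of_prod_apply_eq_formPerm hnd₁ hagree₁ hp z hz
      · exact (linked_of_prod_apply_eq_formPerm hnd₂ hagree₂ hq z hz).trans hpq.symm
    have := length_le_length_add_one_of_linked (fun t ht => (hl t ht).1) hL hall
    simp only [length_append] at this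
    omega
  intro t ht
  obtain ⟨⟨p, q, hpq, rfl⟩, hfix⟩ := hl t ht
  have hmem : ∀ z, swap p q z ≠ z → z ∈ L₁ ++ L₂ := fun z hz => not_not.1 (mt (hfix z) hz)
  have hp := mem_append.1 (hmem p (by simpa using hpq.symm))
  have hq := mem_append.1 (hmem q (by simpa using hpq))
  have hfix_of : ∀ L : List α, p ∈ L → q ∈ L → ∀ z ∉ L, swap p q z = z := fun L hp hq z hz =>
    swap_apply_of_ne_of_ne (ne_of_mem_of_not_mem hp hz).symm (ne_of_mem_of_not_mem hq hz).symm
  rcases hp with hp | hp <;> rcases hq with hq | hq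
  · exact .inl (hfix_of L₁ hp hq)
  · exact absurd (by simpa using Linked.of_mem ht p) (hsep p hp q hq)
  · exact absurd (by simpa using Linked.of_mem ht q) (hsep q hq p hp)
  · exact .inr (hfix_of L₂ hp hq)

lemma exists_isMinimalFactorization_of_prod_eq_formPerm_mul_formPerm (hL : (L₁ ++ L₂).Nodup)
    (hl : ∀ t ∈ l, t.IsSwap ∧ ∀ z ∉ L₁ ++ L₂, t z = z)
    (hlen : l.length + 2 = L₁.length + L₂.length) (hprod : l.prod = L₁.formPerm * L₂.formPerm) :
    ∃ l₁ l₂, IsMinimalFactorization L₁ l₁ ∧ IsMinimalFactorization L₂ l₂ ∧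
      ∀ t ∈ l, t ∈ l₁ ∨ t ∈ l₂ := by
  classical
  obtain ⟨hnd₁, hnd₂, hdisj⟩ := nodup_append.1 hL
  have hside := forall_apply_eq_or_of_prod_eq_formPerm_mul_formPerm hL hl hlen hprod
  set p : Perm α → Bool := fun t => ∀ z ∉ L₁, t z = z
  set l₁ := l.filter p
  set l₂ := l.filter fun t => !p t
  have hl₁ : ∀ t ∈ l₁, t.IsSwap ∧ ∀ z ∉ L₁, t z = z := fun t ht => by
    obtain ⟨ht, hpt⟩ := mem_filter.1 ht
    exact ⟨(hl t ht).1, by simpa [p] using hpt⟩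
  have hl₂ : ∀ t ∈ l₂, t.IsSwap ∧ ∀ z ∉ L₂, t z = z := fun t ht => by
    obtain ⟨ht, hpt⟩ := mem_filter.1 ht
    exact ⟨(hl t ht).1, (hside t ht).resolve_left (by simpa [p] using hpt)⟩
  have hfix₂ : ∀ z ∈ L₁, L₂.formPerm z = z := fun z hz =>
    formPerm_apply_of_notMem fun h => hdisj z hz z h rfl
  have hsplit : l₁.prod * l₂.prod = l.prod := by
    refine prod_filter_mul_prod_filter_not_of_commute p fun a ha b hb hpa hpb => ?_
    refine Perm.Disjoint.commute fun z => ?_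
    by_cases hz : z ∈ L₁
    · exact .inr (hl₂ b (mem_filter.2 ⟨hb, by simp [hpb]⟩) |>.2 z fun h => hdisj z hz z h rfl)
    · exact .inl ((hl₁ a (mem_filter.2 ⟨ha, hpa⟩)).2 z hz)
  have hprod₁ : l₁.prod = L₁.formPerm := by
    refine Perm.eq_left_of_mul_eq_mul (S := {z | z ∈ L₁}) (σ₂ := l₂.prod) (τ₂ := L₂.formPerm)
      (fun z hz => prod_apply_eq_self fun t ht => (hl₁ t ht).2 z hz)
      (fun z hz => formPerm_apply_of_notMem hz)
      (fun z hz => prod_apply_eq_self fun t ht => (hl₂ t ht).2 z fun h => hdisj z hz z h rfl)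
      hfix₂ (hsplit.trans hprod)
  have hprod₂ : l₂.prod = L₂.formPerm := mul_left_cancel (hsplit.trans (hprod₁ ▸ hprod))
  have hlen₁ := length_le_length_add_one_of_prod_eq_formPerm (fun t ht => (hl₁ t ht).1) hnd₁ hprod₁
  have hlen₂ := length_le_length_add_one_of_prod_eq_formPerm (fun t ht => (hl₂ t ht).1) hnd₂ hprod₂
  have hlen₁₂ : l.length = l₁.length + l₂.length := length_eq_length_filter_add p
  refine ⟨l₁, l₂, ⟨hl₁, by omega, hprod₁⟩, ⟨hl₂, by omega, hprod₂⟩, fun t ht => ?_⟩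
  by_cases hpt : p t
  · exact .inl (mem_filter.2 ⟨ht, hpt⟩)
  · exact .inr (mem_filter.2 ⟨ht, by simpa using hpt⟩)

lemma IsMinimalFactorization.exists_split {A B C : List α} {x y : α}
    (hnd : (A ++ x :: B ++ y :: C).Nodup)
    (hf : IsMinimalFactorization (A ++ x :: B ++ y :: C) (swap x y :: l)) :
    ∃ l₁ l₂, IsMinimalFactorization (x :: B) l₁ ∧ IsMinimalFactorization (A ++ y :: C) l₂ ∧
      ∀ t ∈ l, t ∈ l₁ ∨ t ∈ l₂ := by
  obtain ⟨hl, hlen, hprod⟩ := hf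
  have hperm : A ++ x :: B ++ y :: C ~ x :: B ++ (A ++ y :: C) := by
    simpa using (perm_append_comm (l₁ := A) (l₂ := x :: B)).append_right (y :: C)
  refine exists_isMinimalFactorization_of_prod_eq_formPerm_mul_formPerm (hperm.nodup_iff.1 hnd)
    (fun t ht => ?_) ?_ ?_
  · obtain ⟨hsw, hfix⟩ := hl t (mem_cons_of_mem _ ht)
    exact ⟨hsw, fun z hz => hfix z (by rwa [hperm.mem_iff])⟩
  · simp only [length_cons, length_append] at hlen ⊢
    omega
  · rw [← swap_mul_formPerm hnd, ← hprod, prod_cons, ← mul_assoc, swap_mul_self, one_mul]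

end Factorization

section Noncrossing

variable {α : Type*} [LinearOrder α]

lemma exists_eq_append_cons_append_cons {L : List α} (hL : L.Pairwise (· < ·)) {x y : α}
    (hx : x ∈ L) (hy : y ∈ L) (hxy : x < y) : ∃ A B C, L = A ++ x :: B ++ y :: C := by
  obtain ⟨A, T, rfl⟩ := append_of_mem hx
  have hyT : y ∈ T := by
    rcases mem_append.1 hy with hyA | hyT
    · exact absurd ((pairwise_append.1 hL).2.2 y hyA x mem_cons_self) hxy.not_gt
    · exact (mem_cons.1 hyT).resolve_left hxy.ne'
  obtain ⟨B, C, rfl⟩ := append_of_mem hyT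
  exact ⟨A, B, C, by simp⟩

lemma mem_Ico_of_pairwise_lt {A B C : List α} {x y : α}
    (hL : (A ++ x :: B ++ y :: C).Pairwise (· < ·)) :
    (∀ z ∈ x :: B, z ∈ Set.Ico x y) ∧ ∀ z ∈ A ++ y :: C, z ∉ Set.Ico x y := by
  simp only [append_assoc, cons_append, pairwise_append, pairwise_cons, mem_append, mem_cons] at hL
  refine ⟨fun z hz => ?_, fun z hz hzI => ?_⟩ <;> simp only [mem_cons, mem_append] at hz
  · grind
  · grind

def Noncrossing (l : List (Perm α)) : Prop :=
  ∀ ⦃a b a' b' : α⦄, a < b → a' < b' → swap a b ∈ l → swap a' b' ∈ l →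
    ¬(a < a' ∧ a' < b ∧ b < b')

lemma eq_and_eq_of_swap_eq_swap {a b x y : α} (hab : a < b) (hxy : x < y)
    (h : swap a b = swap x y) : a = x ∧ b = y := by
  have hmoved : ∀ z, swap a b z ≠ z → z = x ∨ z = y := fun z hz => by
    rw [h] at hz
    by_contra hc
    simp only [not_or] at hc
    exact hz (swap_apply_of_ne_of_ne hc.1 hc.2)
  rcases hmoved a (by simp [hab.ne']) with rfl | rfl <;>
    rcases hmoved b (by simp [hab.ne]) with rfl | rfl
  all_goals first | exact ⟨rfl, rfl⟩ | order

lemma Noncrossing.swap_cons {l l₁ l₂ : List (Perm α)} (h₁ : Noncrossing l₁) {x y : α} (hxy : x < y)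
    (h₂ : Noncrossing l₂)
    (hl₁ : ∀ t ∈ l₁, ∀ z ∉ Set.Ico x y, t z = z) (hl₂ : ∀ t ∈ l₂, ∀ z ∈ Set.Ico x y, t z = z)
    (hl : ∀ t ∈ l, t ∈ l₁ ∨ t ∈ l₂) : Noncrossing (swap x y :: l) := by
  have hchord : ∀ ⦃a b⦄, a < b → swap a b ∈ swap x y :: l → (a = x ∧ b = y) ∨
      (swap a b ∈ l₁ ∧ a ∈ Set.Ico x y ∧ b ∈ Set.Ico x y) ∨
      (swap a b ∈ l₂ ∧ a ∉ Set.Ico x y ∧ b ∉ Set.Ico x y) := by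
    intro a b hab h
    have ha : swap a b a ≠ a := by simp [hab.ne']
    have hb : swap a b b ≠ b := by simp [hab.ne]
    rcases mem_cons.1 h with h | h
    · exact .inl (eq_and_eq_of_swap_eq_swap hab hxy h)
    rcases hl _ h with h | h
    · exact .inr (.inl ⟨h, by_contra fun hz => ha (hl₁ _ h a hz),
        by_contra fun hz => hb (hl₁ _ h b hz)⟩)
    · exact .inr (.inr ⟨h, fun hz => ha (hl₂ _ h a hz), fun hz => hb (hl₂ _ h b hz)⟩)
  intro a b a' b' hab ha'b' h h' hcross
  obtain ⟨h1, h2, h3⟩ := hcross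
  rcases hchord hab h with ⟨rfl, rfl⟩ | ⟨h, ha, hb⟩ | ⟨h, ha, hb⟩ <;>
    rcases hchord ha'b' h' with ⟨rfl, rfl⟩ | ⟨h', ha', hb'⟩ | ⟨h', ha', hb'⟩
  · exact h1.false
  · exact (h3.trans hb'.2).false
  · exact ha' ⟨h1.le, h2⟩
  · exact (h1.trans_le ha.1).false
  · exact h₁ hab ha'b' h h' ⟨h1, h2, h3⟩
  · exact ha' ⟨ha.1.trans h1.le, h2.trans hb.2⟩
  · exact hb ⟨h2.le, h3⟩
  · exact hb ⟨ha'.1.trans h2.le, h3.trans hb'.2⟩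
  · exact h₂ hab ha'b' h h' ⟨h1, h2, h3⟩

theorem IsMinimalFactorization.noncrossing {L : List α} {l : List (Perm α)}
    (hL : L.Pairwise (· < ·)) (hf : IsMinimalFactorization L l) : Noncrossing l := by
  induction hn : L.length using Nat.strong_induction_on generalizing L l with
  | _ n ih =>
  subst hn
  rcases l with _ | ⟨t, l⟩
  · intro a b _ _ _ _ h
    simp at h
  obtain ⟨⟨u, v, huv, rfl⟩, hfix⟩ := hf.1 t mem_cons_self
  obtain ⟨x, y, hxy, hswap⟩ : ∃ x y, x < y ∧ swap u v = swap x y := by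
    rcases huv.lt_or_gt with h | h
    · exact ⟨u, v, h, rfl⟩
    · exact ⟨v, u, h, swap_comm u v⟩
  rw [hswap] at hf hfix ⊢
  have hmem : ∀ z, swap x y z ≠ z → z ∈ L := fun z hz => not_not.1 (mt (hfix z) hz)
  obtain ⟨A, B, C, rfl⟩ := exists_eq_append_cons_append_cons hL (hmem x (by simp [hxy.ne']))
    (hmem y (by simp [hxy.ne])) hxy
  obtain ⟨hin, hout⟩ := mem_Ico_of_pairwise_lt hL
  obtain ⟨l₁, l₂, hf₁, hf₂, hl⟩ := hf.exists_split (hL.imp ne_of_lt)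
  have hnc₁ := ih _ (by simp; omega) (hL.sublist (by simp)) hf₁ rfl
  have hnc₂ := ih _ (by simp) (hL.sublist (by simp)) hf₂ rfl
  exact hnc₁.swap_cons hxy hnc₂ (fun t ht z hz => (hf₁.1 t ht).2 z fun h => hz (hin z h))
    (fun t ht z hz => (hf₂.1 t ht).2 z fun h => hout z h hz) hl

end Noncrossing

lemma formPerm_finRange (n : ℕ) : (finRange n).formPerm = finRotate n := by
  ext i : 1
  rcases n with _ | n
  · exact i.elim0
  have h := formPerm_apply_getElem (finRange (n + 1)) (nodup_finRange _) i (by simp [i.is_lt])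
  simp only [getElem_finRange, Fin.cast_mk, length_finRange] at h
  rw [h, finRotate_apply]
  ext
  simp [Fin.val_add]

theorem stmt10_general (n : ℕ) (l : List (Equiv.Perm (Fin n)))
    (hl : l ∈ Fcal n 0) :
    ∀ i j : Fin l.length, i ≠ j → ∀ a b a' b' : Fin n, a < b → a' < b' →
      l.get i = Equiv.swap a b → l.get j = Equiv.swap a' b' →
      ¬(a < a' ∧ a' < b ∧ b < b') := by
  obtain ⟨hlen, hsw, hprod⟩ := hl
  intro i j _ a b a' b' hab ha'b' hi hj
  have hf : IsMinimalFactorization (finRange n) l.reverse :=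
    ⟨fun t ht => ⟨hsw t (mem_reverse.1 ht), by simp⟩, by simp [hlen]; have := a.pos; omega,
      by rw [formPerm_finRange]; exact hprod⟩
  exact hf.noncrossing (pairwise_lt_finRange n) hab ha'b' (mem_reverse.2 (hi ▸ get_mem l i))
    (mem_reverse.2 (hj ▸ get_mem l j))

theorem stmt10 (n : ℕ) (hn : 2 ≤ n) (l : List (Equiv.Perm (Fin n)))
    (hl : l ∈ Fcal n 0) :
    ∀ i j : Fin l.length, i ≠ j → ∀ a b a' b' : Fin n, a < b → a' < b' →
      l.get i = Equiv.swap a b → l.get j = Equiv.swap a' b' →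
      ¬(a < a' ∧ a' < b ∧ b < b') :=
  stmt10_general n l hl
end
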